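/- If G and H are connected free graphs and there exists a graph homomorphism from G to H that is surjective on edges, then φ(G) ≤ φ(H), where φ denotes the free chromatic number. -/

import Mathlib

open SimpleGraph

variable {V : Type*} {W : Type*}

/-- An independent set in a simple graph. -/
def IsIndep (G : SimpleGraph V) (s : Set V) : Prop :=
  ∀ ⦃u⦄, u ∈ s → ∀ ⦃v⦄, v ∈ s → ¬ G.Adj u v

/-- A maximal independent set. -/
def IsMaxIndep (G : SimpleGraph V) (s : Set V) : Prop :=
  IsIndep G s ∧ ∀ t : Set V, IsIndep G t → s ⊆ t → s = t

/-- A free independent set: an independent set contained in at least two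
distinct maximal independent sets. -/
def IsFreeIndep (G : SimpleGraph V) (s : Set V) : Prop :=
  IsIndep G s ∧ ∃ M₁ M₂ : Set V, IsMaxIndep G M₁ ∧ IsMaxIndep G M₂ ∧ M₁ ≠ M₂ ∧ s ⊆ M₁ ∧ s ⊆ M₂

/-- A free graph: every vertex lies in some free independent set. -/
def IsFreeGraph (G : SimpleGraph V) : Prop :=
  ∀ v : V, ∃ F : Set V, IsFreeIndep G F ∧ v ∈ F

/-- A partition of the vertices into `t` free independent sets. -/
def FreePartition (G : SimpleGraph V) (t : ℕ) : Prop :=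
  ∃ P : Fin t → Set V, (∀ i, IsFreeIndep G (P i)) ∧ ∀ v : V, ∃! i, v ∈ P i

/-- The free chromatic number `φ(G)` (`∞` if no free partition exists). -/
noncomputable def freeChrom (G : SimpleGraph V) : ℕ∞ :=
  sInf {t : ℕ∞ | ∃ n : ℕ, t = n ∧ FreePartition G n}

/-- The chromatic number as a natural number. -/
noncomputable def chromNum (G : SimpleGraph V) : ℕ :=
  sInf {k : ℕ | G.Colorable k}

/-- The circular complete graph `K_{n/d}`. -/
def circKG (n d : ℕ) : SimpleGraph (Fin n) where
  Adj i j := i ≠ j ∧ d ≤ ((i : ℤ) - (j : ℤ)).natAbs ∧ ((i : ℤ) - (j : ℤ)).natAbs ≤ n - d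
  symm := by
    refine ⟨?_⟩
    intro i j h
    obtain ⟨h1, h2, h3⟩ := h
    refine ⟨h1.symm, ?_, ?_⟩ <;> omega
  loopless := ⟨by intro i h; exact h.1 rfl⟩

/-- The circular chromatic number, as a real number. -/
noncomputable def circChrom (G : SimpleGraph V) : ℝ :=
  sInf {x : ℝ | ∃ n d : ℕ, 0 < d ∧ Nat.gcd n d = 1 ∧ x = (n : ℝ) / d ∧
    Nonempty (G →g circKG n d)}

/-- The Mycielskian of a graph. -/
def mycielskian (G : SimpleGraph V) : SimpleGraph (Option (V ⊕ V)) where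
  Adj x y := match x, y with
    | some (Sum.inl u), some (Sum.inl v) => G.Adj u v
    | some (Sum.inl u), some (Sum.inr v) => G.Adj u v
    | some (Sum.inr u), some (Sum.inl v) => G.Adj u v
    | some (Sum.inr _), none => True
    | none, some (Sum.inr _) => True
    | _, _ => False
  symm := by
    refine ⟨?_⟩
    rintro (_ | (u | u)) (_ | (v | v)) h <;> simp_all <;> exact G.adj_symm h
  loopless := by
    refine ⟨?_⟩
    rintro (_ | (u | u)) h <;> simp_all

/-- Vertex type of the iterated Mycielskian. -/
def MycV (V : Type u) : ℕ → Type u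
  | 0 => V
  | t + 1 => Option (MycV V t ⊕ MycV V t)

/-- The `t`-fold iterated Mycielskian. -/
def mycIter (G : SimpleGraph V) : ∀ t : ℕ, SimpleGraph (MycV V t)
  | 0 => G
  | t + 1 => mycielskian (mycIter G t)

/-- The maximum size of a free independent set. -/
noncomputable def freeAlpha (G : SimpleGraph V) : ℕ :=
  sSup {k : ℕ | ∃ F : Set V, IsFreeIndep G F ∧ k = F.ncard}

/-- The independence number. -/
noncomputable def alphaNum (G : SimpleGraph V) : ℕ :=
  sSup {k : ℕ | ∃ S : Set V, IsIndep G S ∧ k = S.ncard}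

/-- `d(G)`: the minimum over edges `uv` of `|N(u) ∪ N(v)|`. -/
noncomputable def dMin (G : SimpleGraph V) : ℕ :=
  sInf {k : ℕ | ∃ u v : V, G.Adj u v ∧ k = (G.neighborSet u ∪ G.neighborSet v).ncard}

/-- An `(a,b)`-free coloring of `G` with `t` colors. -/
def ABFree (G : SimpleGraph V) (a b t : ℕ) : Prop :=
  ∃ (P : Fin t → Set V) (e : Fin (t - a) → V × V),
    (∀ v : V, ∃! i, v ∈ P i) ∧
    (∀ i, IsIndep G (P i)) ∧
    (∀ i : Fin (t - a), IsFreeIndep G (P (Fin.castLE (Nat.sub_le t a) i))) ∧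
    (∀ i : Fin (t - a), G.Adj (e i).1 (e i).2 ∧
      (G.neighborSet (e i).1 ∪ G.neighborSet (e i).2) ∩ P (Fin.castLE (Nat.sub_le t a) i) = ∅) ∧
    (∀ v : V, Set.ncard {i : Fin (t - a) | v = (e i).1 ∨ v = (e i).2} ≤ b)

/-- The `(a,b)`-free chromatic number `φ^a_b(G)`. -/
noncomputable def abFreeChrom (G : SimpleGraph V) (a b : ℕ) : ℕ∞ :=
  sInf {t : ℕ∞ | ∃ n : ℕ, t = n ∧ ABFree G a b n}

/-- The Kneser graph `KG(m,n)`. -/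
def kneser (m n : ℕ) : SimpleGraph {A : Finset (Fin m) // A.card = n} where
  Adj A B := A ≠ B ∧ Disjoint A.1 B.1
  symm := ⟨fun A B h => ⟨h.1.symm, h.2.symm⟩⟩
  loopless := ⟨fun A h => h.1 rfl⟩

/-- The generalized Kneser graph `KG(m,n,s)`. -/
def genKneser (m n s : ℕ) : SimpleGraph {A : Finset (Fin m) // A.card = n} where
  Adj A B := A ≠ B ∧ (A.1 ∩ B.1).card ≤ s
  symm := ⟨fun A B h => ⟨h.1.symm, by rw [Finset.inter_comm]; exact h.2⟩⟩
  loopless := ⟨fun A h => h.1 rfl⟩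

/-- 2-stability of a subset of `[m]`. -/
def TwoStable (m : ℕ) (A : Finset (Fin m)) : Prop :=
  ∀ x ∈ A, ∀ y ∈ A, x ≠ y →
    2 ≤ ((x : ℤ) - (y : ℤ)).natAbs ∧ ((x : ℤ) - (y : ℤ)).natAbs ≤ m - 2

/-- The Schrijver graph `SG(m,n)`. -/
def schrijver (m n : ℕ) :
    SimpleGraph {A : Finset (Fin m) // A.card = n ∧ TwoStable m A} where
  Adj A B := A ≠ B ∧ Disjoint A.1 B.1
  symm := ⟨fun A B h => ⟨h.1.symm, h.2.symm⟩⟩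
  loopless := ⟨fun A h => h.1 rfl⟩

/-!
Pulling a free partition of `H` back along `f` gives a partition of `G` into independent sets.
Each part stays free: if `s` lies in two distinct maximal independent sets `A ≠ B` of `H`, pick
`x ∈ A \ B` and, by maximality of `B`, a neighbour `y ∈ B` of `x`. Lifting the edge `xy` to an
edge `uv` of `G`, the sets `f⁻¹' s ∪ {u}` and `f⁻¹' s ∪ {v}` are independent and extend to maximal
independent sets, which differ because `u` and `v` are adjacent.
-/

lemma IsIndep.mono {G : SimpleGraph V} {s t : Set V} (hs : IsIndep G s) (hts : t ⊆ s) :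
    IsIndep G t :=
  fun _ hu _ hv => hs (hts hu) (hts hv)

lemma IsIndep.preimage {G : SimpleGraph V} {H : SimpleGraph W} (f : G →g H) {s : Set W}
    (hs : IsIndep H s) : IsIndep G (f ⁻¹' s) :=
  fun _ hu _ hv huv => hs hu hv (f.map_adj huv)

lemma IsIndep.exists_isMaxIndep_superset {G : SimpleGraph V} {s : Set V} (hs : IsIndep G s) :
    ∃ M : Set V, IsMaxIndep G M ∧ s ⊆ M := by
  obtain ⟨M, hsM, hM⟩ := zorn_subset_nonempty {t : Set V | IsIndep G t}
    (fun c hc hchain _ => by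
      refine ⟨⋃₀ c, ?_, fun t ht => Set.subset_sUnion_of_mem ht⟩
      rintro u ⟨t₁, ht₁, hu⟩ v ⟨t₂, ht₂, hv⟩
      rcases hchain.total ht₁ ht₂ with h | h
      · exact hc ht₂ (h hu) hv
      · exact hc ht₁ hu (h hv)) s hs
  exact ⟨M, ⟨hM.prop, fun t ht hMt => hM.eq_of_subset ht hMt⟩, hsM⟩

lemma IsMaxIndep.exists_adj_of_notMem {G : SimpleGraph V} {M : Set V} (hM : IsMaxIndep G M)
    {x : V} (hx : x ∉ M) : ∃ y ∈ M, G.Adj x y := by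
  by_contra! h
  have hind : IsIndep G (insert x M) := by
    rintro u (rfl | hu) v (rfl | hv) huv
    · exact huv.ne rfl
    · exact h v hv huv
    · exact h u hu huv.symm
    · exact hM.1 hu hv huv
  exact hx (hM.2 _ hind (Set.subset_insert x M) ▸ Set.mem_insert x M)

lemma IsFreeIndep.preimage {G : SimpleGraph V} {H : SimpleGraph W} (f : G →g H)
    (hf : ∀ x y : W, H.Adj x y → ∃ u v : V, G.Adj u v ∧ f u = x ∧ f v = y) {s : Set W}
    (hs : IsFreeIndep H s) : IsFreeIndep G (f ⁻¹' s) := by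
  obtain ⟨hsi, A, B, hA, hB, hAB, hsA, hsB⟩ := hs
  obtain ⟨x, hxA, hxB⟩ := Set.not_subset.mp fun h => hAB (hA.2 B hB.1 h)
  obtain ⟨y, hyB, hxy⟩ := hB.exists_adj_of_notMem hxB
  obtain ⟨u, v, huv, rfl, rfl⟩ := hf x y hxy
  have hu : IsIndep G (insert u (f ⁻¹' s)) :=
    (hA.1.preimage f).mono (Set.insert_subset hxA (Set.preimage_mono hsA))
  have hv : IsIndep G (insert v (f ⁻¹' s)) :=
    (hB.1.preimage f).mono (Set.insert_subset hyB (Set.preimage_mono hsB))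
  obtain ⟨N₁, hN₁, huN₁⟩ := hu.exists_isMaxIndep_superset
  obtain ⟨N₂, hN₂, hvN₂⟩ := hv.exists_isMaxIndep_superset
  have hN : N₁ ≠ N₂ := fun h => hN₂.1 (h ▸ huN₁ (Set.mem_insert u _)) (hvN₂ (Set.mem_insert v _)) huv
  exact ⟨hsi.preimage f, N₁, N₂, hN₁, hN₂, hN,
    (Set.subset_insert u _).trans huN₁, (Set.subset_insert v _).trans hvN₂⟩

lemma FreePartition.preimage {G : SimpleGraph V} {H : SimpleGraph W} (f : G →g H)
    (hf : ∀ x y : W, H.Adj x y → ∃ u v : V, G.Adj u v ∧ f u = x ∧ f v = y) {n : ℕ}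
    (h : FreePartition H n) : FreePartition G n := by
  obtain ⟨P, hfree, hpart⟩ := h
  exact ⟨fun i => f ⁻¹' P i, fun i => (hfree i).preimage f hf, fun v => hpart (f v)⟩

theorem stmt2_general {V W : Type*} (G : SimpleGraph V) (H : SimpleGraph W)
    (f : G →g H) (hf : ∀ x y : W, H.Adj x y → ∃ u v : V, G.Adj u v ∧ f u = x ∧ f v = y) :
    freeChrom G ≤ freeChrom H := by
  apply sInf_le_sInf
  rintro t ⟨n, rfl, hP⟩
  exact ⟨n, rfl, hP.preimage f hf⟩

/-- an edge-surjective homomorphism between connected free graphs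
gives `φ(G) ≤ φ(H)`. -/
theorem stmt2 {V W : Type*} [Fintype V] [Fintype W] (G : SimpleGraph V) (H : SimpleGraph W)
    (hGc : G.Connected) (hHc : H.Connected) (hGf : IsFreeGraph G) (hHf : IsFreeGraph H)
    (f : G →g H) (hf : ∀ x y : W, H.Adj x y → ∃ u v : V, G.Adj u v ∧ f u = x ∧ f v = y) :
    freeChrom G ≤ freeChrom H :=
  stmt2_general G H f hf
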